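/- Fix 1 ≤ ℓ < k ≤ K and assume that for every i with ℓ < i ≤ k there exists x ∈ S_i with p(x,S_{[0,ℓ]}) > 0. Define c*_ℓ = max_{ℓ<i≤k} max_{x∈S_i : p(x,S_{[0,ℓ]})>0} p(x,S_ℓ)/p(x,S_{[0,ℓ]}), and define recursively c*_{ℓ,ℓ} = 1 and, for j = ℓ+1, …, k, c*_{j,ℓ} = max_{x∈S_j} ( r(x,S_ℓ) + Σ_{i=ℓ+1}^{j−1} r(x,S_i) · c*_{i,ℓ} ). Then: (1) c*_{i,ℓ} ≤ c*_ℓ for every i with ℓ < i ≤ k; and (2) if for some i with ℓ < i ≤ k every x ∈ S_i satisfies p(x,S_{[0,ℓ]}) > 0 and max_{x∈S_i} p(x,S_ℓ)/p(x,S_{[0,ℓ]}) < c*_ℓ, then c*_{i,ℓ} < c*_ℓ. -/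

import Mathlib

open Finset

/-- A finite state space partitioned into fitness levels `S_0, …, S_K`
(`lev x = k` means `x ∈ S_k`), together with an elitist row-stochastic
transition matrix `p`. -/
structure LevelChain (S : Type*) [Fintype S] where
  /-- the number of non-optimal levels -/
  K : ℕ
  /-- the level of each state -/
  lev : S → ℕ
  one_le_K : 1 ≤ K
  lev_le : ∀ x, lev x ≤ K
  level_nonempty : ∀ k ≤ K, ∃ x, lev x = k
  /-- transition probabilities -/
  p : S → S → ℝ
  p_nonneg : ∀ x y, 0 ≤ p x y
  p_row_sum : ∀ x, ∑ y, p x y = 1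
  elitist : ∀ x y, lev x < lev y → p x y = 0

variable {S : Type*} [Fintype S]

/-- The fitness level `S_k`. -/
def LevelChain.level (c : LevelChain S) (k : ℕ) : Finset S :=
  Finset.univ.filter fun x => c.lev x = k

/-- The union of levels `S_{[i,j]} = S_i ∪ ⋯ ∪ S_j`. -/
def LevelChain.levels (c : LevelChain S) (i j : ℕ) : Finset S :=
  Finset.univ.filter fun x => i ≤ c.lev x ∧ c.lev x ≤ j

/-- `p(x, A) = Σ_{y ∈ A} p(x, y)`. -/
def LevelChain.pSet (c : LevelChain S) (x : S) (A : Finset S) : ℝ :=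
  ∑ y ∈ A, c.p x y

/-- The standing reachability assumption: from every non-optimal state one can
move to a better level with positive probability. -/
def LevelChain.Reachable (c : LevelChain S) : Prop :=
  ∀ k, 1 ≤ k → k ≤ c.K → ∀ x, c.lev x = k → 0 < c.pSet x (c.levels 0 (k - 1))

/-- Conditional transition probability `r(x, S_j)`:
`r(x,S_j) = p(x,S_j)/(1 − p(x,S_k))` for `j ≠ k = lev x`, and `r(x,S_k) = 0`. -/
noncomputable def LevelChain.r (c : LevelChain S) (x : S) (j : ℕ) : ℝ :=
  if j = c.lev x then 0
  else c.pSet x (c.level j) / (1 - c.pSet x (c.level (c.lev x)))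

/-- `r_min(X_k, S_j) = min_{x ∈ S_k} r(x, S_j)`. -/
noncomputable def LevelChain.rmin (c : LevelChain S) (k j : ℕ) : ℝ :=
  sInf ((fun x => c.r x j) '' {x | c.lev x = k})

/-- `r_max(X_k, S_j) = max_{x ∈ S_k} r(x, S_j)`. -/
noncomputable def LevelChain.rmax (c : LevelChain S) (k j : ℕ) : ℝ :=
  sSup ((fun x => c.r x j) '' {x | c.lev x = k})

/-- `m` is the mean hitting time of the optimal level `S_0`. -/
def LevelChain.IsMeanHittingTime (c : LevelChain S) (m : S → ℝ) : Prop :=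
  (∀ x, 0 ≤ m x) ∧
  (∀ x, c.lev x = 0 → m x = 0) ∧
  (∀ x, c.lev x ≠ 0 → m x = 1 + ∑ y, c.p x y * m y)

/-- `mbar` is the mean level-leaving time on `S ∖ S_0`. -/
def LevelChain.IsLevelLeavingTime (c : LevelChain S) (mbar : S → ℝ) : Prop :=
  (∀ x, c.lev x ≠ 0 → 0 ≤ mbar x) ∧
  (∀ x, c.lev x ≠ 0 → mbar x = 1 + ∑ y ∈ c.level (c.lev x), c.p x y * mbar y)

/-- `h ℓ x` is the probability of hitting level `S_ℓ` starting from `x`. -/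
def LevelChain.IsHitProb (c : LevelChain S) (h : ℕ → S → ℝ) : Prop :=
  (∀ ℓ x, 0 ≤ h ℓ x ∧ h ℓ x ≤ 1) ∧
  (∀ ℓ x, c.lev x = ℓ → h ℓ x = 1) ∧
  (∀ ℓ x, c.lev x < ℓ → h ℓ x = 0) ∧
  (∀ ℓ x, ℓ < c.lev x →
    h ℓ x = ∑ y ∈ c.levels ℓ (c.lev x), c.p x y * h ℓ y)

/-!
For `x ∈ S_j` with `ℓ < j`, elitism splits the denominator `1 - p(x,S_j)` of `r(x,·)` as
`p(x,S_{[0,ℓ]}) + Σ_{ℓ<t<j} p(x,S_t)`. Hence `r(x,S_ℓ) + Σ_{ℓ<t<j} r(x,S_t) c*_{t,ℓ}` is a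
weighted average of the ratio `p(x,S_ℓ)/p(x,S_{[0,ℓ]})` (weight `p(x,S_{[0,ℓ]})`) and of the
`c*_{t,ℓ}` (weights `p(x,S_t)`). By strong induction on `j` all of these are at most `c*_ℓ`, so
the average is too; and it is strictly smaller as soon as the ratio is strictly smaller and has
positive weight.
-/

theorem add_sum_mul_le_mul_add_mul_sum {ι 𝕜 : Type*} [Field 𝕜] [LinearOrder 𝕜]
    [IsStrictOrderedRing 𝕜] {s : Finset ι} {q w : ι → 𝕜} {a P B C : 𝕜}
    (hq : ∀ t ∈ s, 0 ≤ q t) (hw : ∀ t ∈ s, w t ≤ C) (ha : a ≤ B * P) :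
    a + ∑ t ∈ s, q t * w t ≤ B * P + C * ∑ t ∈ s, q t := by
  rw [mul_sum]
  refine add_le_add ha (sum_le_sum fun t ht => ?_)
  rw [mul_comm C]
  exact mul_le_mul_of_nonneg_left (hw t ht) (hq t ht)

theorem add_sum_mul_div_le {ι 𝕜 : Type*} [Field 𝕜] [LinearOrder 𝕜]
    [IsStrictOrderedRing 𝕜] {s : Finset ι} {q w : ι → 𝕜} {a P B C : 𝕜}
    (hq : ∀ t ∈ s, 0 ≤ q t) (hw : ∀ t ∈ s, w t ≤ C) (ha : a ≤ B * P) (hP : 0 ≤ P)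
    (hBC : B ≤ C) (hD : 0 < P + ∑ t ∈ s, q t) :
    (a + ∑ t ∈ s, q t * w t) / (P + ∑ t ∈ s, q t) ≤ C := by
  rw [div_le_iff₀ hD]
  linarith [add_sum_mul_le_mul_add_mul_sum hq hw ha, mul_le_mul_of_nonneg_right hBC hP]

theorem add_sum_mul_div_lt {ι 𝕜 : Type*} [Field 𝕜] [LinearOrder 𝕜]
    [IsStrictOrderedRing 𝕜] {s : Finset ι} {q w : ι → 𝕜} {a P B C : 𝕜}
    (hq : ∀ t ∈ s, 0 ≤ q t) (hw : ∀ t ∈ s, w t ≤ C) (ha : a ≤ B * P) (hP : 0 < P)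
    (hBC : B < C) :
    (a + ∑ t ∈ s, q t * w t) / (P + ∑ t ∈ s, q t) < C := by
  have hD : 0 < P + ∑ t ∈ s, q t := add_pos_of_pos_of_nonneg hP (sum_nonneg hq)
  rw [div_lt_iff₀ hD]
  linarith [add_sum_mul_le_mul_add_mul_sum hq hw ha, mul_lt_mul_of_pos_right hBC hP]

namespace LevelChain

variable (c : LevelChain S) (x : S)

theorem pSet_nonneg (A : Finset S) : 0 ≤ c.pSet x A :=
  sum_nonneg fun y _ => c.p_nonneg x y

theorem pSet_level_le_pSet_levels (ℓ : ℕ) :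
    c.pSet x (c.level ℓ) ≤ c.pSet x (c.levels 0 ℓ) :=
  sum_le_sum_of_subset_of_nonneg
    (fun y hy => by simp_all [level, levels]) fun y _ _ => c.p_nonneg x y

theorem pSet_level_le_mul_pSet_levels {ℓ : ℕ} {B : ℝ}
    (h : 0 < c.pSet x (c.levels 0 ℓ) → c.pSet x (c.level ℓ) / c.pSet x (c.levels 0 ℓ) ≤ B) :
    c.pSet x (c.level ℓ) ≤ B * c.pSet x (c.levels 0 ℓ) := by
  rcases (c.pSet_nonneg x (c.levels 0 ℓ)).lt_or_eq with hP | hP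
  · exact (div_le_iff₀ hP).1 (h hP)
  · rw [← hP, mul_zero]
    exact hP ▸ c.pSet_level_le_pSet_levels x ℓ

theorem pSet_levels_zero_eq_sum_range (b : ℕ) :
    c.pSet x (c.levels 0 b) = ∑ t ∈ range (b + 1), c.pSet x (c.level t) := by
  rw [pSet, ← sum_fiberwise_of_maps_to (g := c.lev) (t := range (b + 1))
    (fun y hy => by simp_all [levels])]
  refine sum_congr rfl fun t ht => sum_congr ?_ fun _ _ => rfl
  ext y
  simp only [levels, level, mem_filter, mem_univ, true_and, mem_range] at ht ⊢
  omega

theorem pSet_levels_zero_lev : c.pSet x (c.levels 0 (c.lev x)) = 1 := by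
  rw [pSet, sum_subset (subset_univ _) fun y _ hy => c.elitist x y ?_, c.p_row_sum x]
  simpa [levels] using hy

theorem one_sub_pSet_level_lev {ℓ : ℕ} (hℓ : ℓ < c.lev x) :
    1 - c.pSet x (c.level (c.lev x)) =
      c.pSet x (c.levels 0 ℓ) + ∑ t ∈ Ioo ℓ (c.lev x), c.pSet x (c.level t) := by
  have h := c.pSet_levels_zero_lev x
  rw [pSet_levels_zero_eq_sum_range, sum_range_succ,
    ← sum_range_add_sum_Ico _ (show ℓ + 1 ≤ c.lev x by omega)] at h
  rw [pSet_levels_zero_eq_sum_range, ← Ico_add_one_left_eq_Ioo]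
  linarith

theorem pSet_levels_pred_lev (hx : 1 ≤ c.lev x) :
    c.pSet x (c.levels 0 (c.lev x - 1)) = 1 - c.pSet x (c.level (c.lev x)) := by
  have h := c.pSet_levels_zero_lev x
  obtain ⟨j, hj⟩ : ∃ j, c.lev x = j + 1 := ⟨c.lev x - 1, by omega⟩
  rw [pSet_levels_zero_eq_sum_range, hj, sum_range_succ] at h
  rw [pSet_levels_zero_eq_sum_range, hj, Nat.add_sub_cancel]
  linarith

theorem r_add_sum_r_mul_eq {ℓ : ℕ} (hℓ : ℓ < c.lev x) (w : ℕ → ℝ) :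
    c.r x ℓ + ∑ t ∈ Ioo ℓ (c.lev x), c.r x t * w t =
      (c.pSet x (c.level ℓ) + ∑ t ∈ Ioo ℓ (c.lev x), c.pSet x (c.level t) * w t) /
        (c.pSet x (c.levels 0 ℓ) + ∑ t ∈ Ioo ℓ (c.lev x), c.pSet x (c.level t)) := by
  have hr (t : ℕ) (ht : t < c.lev x) :
      c.r x t = c.pSet x (c.level t) / (1 - c.pSet x (c.level (c.lev x))) :=
    if_neg ht.ne
  rw [← c.one_sub_pSet_level_lev x hℓ, hr ℓ hℓ, add_div, sum_div]
  congr 1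
  refine sum_congr rfl fun t ht => ?_
  rw [hr t (mem_Ioo.1 ht).2, div_mul_eq_mul_div]

theorem Reachable.pSet_levels_add_sum_pos (hreach : c.Reachable) {ℓ : ℕ} (hℓ : ℓ < c.lev x) :
    0 < c.pSet x (c.levels 0 ℓ) + ∑ t ∈ Ioo ℓ (c.lev x), c.pSet x (c.level t) := by
  rw [← c.one_sub_pSet_level_lev x hℓ, ← c.pSet_levels_pred_lev x (by omega)]
  exact hreach _ (by omega) (c.lev_le x) x rfl

theorem r_add_sum_r_mul_le (hreach : c.Reachable) {ℓ : ℕ} (hℓ : ℓ < c.lev x) {w : ℕ → ℝ}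
    {C : ℝ} (hw : ∀ t ∈ Ioo ℓ (c.lev x), w t ≤ C)
    (ha : c.pSet x (c.level ℓ) ≤ C * c.pSet x (c.levels 0 ℓ)) :
    c.r x ℓ + ∑ t ∈ Ioo ℓ (c.lev x), c.r x t * w t ≤ C :=
  (c.r_add_sum_r_mul_eq x hℓ w).trans_le <| add_sum_mul_div_le
    (fun _ _ => c.pSet_nonneg x _) hw ha (c.pSet_nonneg x _) le_rfl
    (hreach.pSet_levels_add_sum_pos c x hℓ)

theorem r_add_sum_r_mul_lt {ℓ : ℕ} (hℓ : ℓ < c.lev x) {w : ℕ → ℝ} {B C : ℝ}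
    (hw : ∀ t ∈ Ioo ℓ (c.lev x), w t ≤ C)
    (ha : c.pSet x (c.level ℓ) ≤ B * c.pSet x (c.levels 0 ℓ))
    (hP : 0 < c.pSet x (c.levels 0 ℓ)) (hBC : B < C) :
    c.r x ℓ + ∑ t ∈ Ioo ℓ (c.lev x), c.r x t * w t < C :=
  (c.r_add_sum_r_mul_eq x hℓ w).trans_lt <| add_sum_mul_div_lt
    (fun _ _ => c.pSet_nonneg x _) hw ha hP hBC

end LevelChain

theorem best_typeCkl_dominates_typeCl_upper_general
    (c : LevelChain S) (hreach : c.Reachable)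
    (ℓ k : ℕ) (hk : k ≤ c.K)
    (clstar : ℝ)
    (hclstar : clstar =
      sSup ((fun x => c.pSet x (c.level ℓ) / c.pSet x (c.levels 0 ℓ)) ''
        {x | ℓ < c.lev x ∧ c.lev x ≤ k ∧ 0 < c.pSet x (c.levels 0 ℓ)}))
    (cstar : ℕ → ℝ)
    (hcstar : ∀ j, ℓ < j → j ≤ k → cstar j =
      sSup ((fun x => c.r x ℓ + ∑ i ∈ Finset.Ioo ℓ j, c.r x i * cstar i) ''
        {x | c.lev x = j})) :
    (∀ i, ℓ < i → i ≤ k → cstar i ≤ clstar) ∧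
    (∀ i, ℓ < i → i ≤ k →
      (∀ x, c.lev x = i → 0 < c.pSet x (c.levels 0 ℓ)) →
      sSup ((fun x => c.pSet x (c.level ℓ) / c.pSet x (c.levels 0 ℓ)) ''
        {x | c.lev x = i}) < clstar →
      cstar i < clstar) := by
  set ρ := fun x => c.pSet x (c.level ℓ) / c.pSet x (c.levels 0 ℓ)
  have hne (i : ℕ) (hik : i ≤ k) : {x | c.lev x = i}.Nonempty :=
    c.level_nonempty i (hik.trans hk)
  have hle (i : ℕ) : ℓ < i → i ≤ k → cstar i ≤ clstar := by
    induction i using Nat.strong_induction_on with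
    | _ i ih =>
      intro hℓi hik
      rw [hcstar i hℓi hik]
      refine csSup_le ((hne i hik).image _) ?_
      rintro _ ⟨x, rfl, rfl⟩
      refine c.r_add_sum_r_mul_le x hreach hℓi
        (fun t ht => ih t (mem_Ioo.1 ht).2 (mem_Ioo.1 ht).1 ((mem_Ioo.1 ht).2.le.trans hik)) ?_
      exact c.pSet_level_le_mul_pSet_levels x fun hP => hclstar ▸
        le_csSup ((Set.toFinite _).image ρ).bddAbove ⟨x, ⟨hℓi, hik, hP⟩, rfl⟩
  refine ⟨hle, fun i hℓi hik hpos hlt => ?_⟩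
  rw [hcstar i hℓi hik,
    Set.Finite.csSup_lt_iff ((Set.toFinite _).image _) ((hne i hik).image _)]
  have hρ (x : S) (hx : c.lev x = i) : ρ x ≤ sSup (ρ '' {x | c.lev x = i}) :=
    le_csSup ((Set.toFinite _).image ρ).bddAbove ⟨x, hx, rfl⟩
  rintro _ ⟨x, rfl, rfl⟩
  exact c.r_add_sum_r_mul_lt x hℓi
    (fun t ht => hle t (mem_Ioo.1 ht).1 ((mem_Ioo.1 ht).2.le.trans hik))
    (c.pSet_level_le_mul_pSet_levels x fun _ => hρ x rfl) (hpos x rfl) hlt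

/-- The best Type-`c_{k,ℓ}` upper-bound coefficients Pareto dominate
the best Type-`c_ℓ` coefficient: with
`c*_ℓ = max_{ℓ<i≤k} max_{x∈S_i : p(x,S_{[0,ℓ]})>0} p(x,S_ℓ)/p(x,S_{[0,ℓ]})` and
`c*_{ℓ,ℓ} = 1`, `c*_{j,ℓ} = max_{x∈S_j}( r(x,S_ℓ) + Σ_{i=ℓ+1}^{j−1} r(x,S_i)·c*_{i,ℓ} )`,
we have (1) `c*_{i,ℓ} ≤ c*_ℓ` for all `ℓ < i ≤ k`, and (2) strict inequality at any `i`
where `max_{x∈S_i} p(x,S_ℓ)/p(x,S_{[0,ℓ]}) < c*_ℓ` (all `x ∈ S_i` having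
`p(x,S_{[0,ℓ]}) > 0`). -/
theorem best_typeCkl_dominates_typeCl_upper
    (c : LevelChain S) (hreach : c.Reachable)
    (ℓ k : ℕ) (hℓ : 1 ≤ ℓ) (hℓk : ℓ < k) (hk : k ≤ c.K)
    (hex : ∀ i, ℓ < i → i ≤ k → ∃ x, c.lev x = i ∧ 0 < c.pSet x (c.levels 0 ℓ))
    (clstar : ℝ)
    (hclstar : clstar =
      sSup ((fun x => c.pSet x (c.level ℓ) / c.pSet x (c.levels 0 ℓ)) ''
        {x | ℓ < c.lev x ∧ c.lev x ≤ k ∧ 0 < c.pSet x (c.levels 0 ℓ)}))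
    (cstar : ℕ → ℝ)
    (hcstardiag : cstar ℓ = 1)
    (hcstar : ∀ j, ℓ < j → j ≤ k → cstar j =
      sSup ((fun x => c.r x ℓ + ∑ i ∈ Finset.Ioo ℓ j, c.r x i * cstar i) ''
        {x | c.lev x = j})) :
    (∀ i, ℓ < i → i ≤ k → cstar i ≤ clstar) ∧
    (∀ i, ℓ < i → i ≤ k →
      (∀ x, c.lev x = i → 0 < c.pSet x (c.levels 0 ℓ)) →
      sSup ((fun x => c.pSet x (c.level ℓ) / c.pSet x (c.levels 0 ℓ)) ''
        {x | c.lev x = i}) < clstar →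
      cstar i < clstar) :=
  best_typeCkl_dominates_typeCl_upper_general c hreach ℓ k hk clstar hclstar cstar hcstar
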